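/- arXiv:math/0409582 — 4 statements merged into one kernel-verified Lean document; each statement's English description precedes it below -/
import Mathlib

section
/- Suppose the Poincaré series of a Kleinian group Γ converges at exponent α, and let m be an α-conformal measure for Γ. Then every conical limit point z of Γ is contained in a family of shadows S_r(γ_k(y)) with m(S_r(γ_k(y))) ≤ c·exp(-α·d(0, γ_k(y))) and d(0, γ_k(y)) → ∞; consequently m gives zero measure to the conical limit set Λ_c(Γ). -/
open MeasureTheory

theorem MeasureTheory.measure_eq_zero_of_forall_infinite_setOf_mem {α ι : Type*}
    [MeasurableSpace α] [Countable ι] {μ : Measure α} {s : ι → Set α} {t : Set α}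
    (hs : ∑' i, μ (s i) ≠ ⊤) (ht : ∀ x ∈ t, {i | x ∈ s i}.Infinite) : μ t = 0 :=
  measure_mono_null ht (ae_iff.1 (ae_finite_setOfPred_mem hs))

/-- Suppose the Poincaré series of a Kleinian group `Γ` converges at
exponent `α` (i.e. `Σ_{γ∈Γ} exp(-α·d(0, γ(y))) < ∞`, where `d = hd` is the hyperbolic
metric and `o` is the origin), and let `m` be an `α`-conformal measure for `Γ`.  By
Sullivan's shadow lemma the shadows `S_r(γ(y))` from the origin satisfy
`m(S_r(γ(y))) ≤ c·exp(-α·d(0, γ(y)))`, and every conical limit point `z ∈ Λ_c(Γ)` is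
contained in infinitely many of the shadows `S_r(γ(y))`.  Consequently (by a Borel–Cantelli
argument) `m` gives zero measure to the conical limit set `Λ_c(Γ)`. -/
theorem conformal_measure_of_conical_limit_set_zero
    {X : Type*} [MeasurableSpace X] {G : Type*} [Group G] [Countable G] [MulAction G X]
    (hd : X → X → ℝ) (o y : X) (α c : ℝ)
    (m : Measure X)
    (S : G → Set X)  -- `S γ` is the shadow `S_r(γ(y))` from the origin
    (Λc : Set X)     -- the conical limit set of `Γ`
    (hpoincare : Summable fun γ : G => Real.exp (-α * hd o (γ • y)))
    (hshadow : ∀ γ : G, m (S γ) ≤ ENNReal.ofReal (c * Real.exp (-α * hd o (γ • y))))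
    (hconical : ∀ z ∈ Λc, {γ : G | z ∈ S γ}.Infinite) :
    m Λc = 0 := by
  have hshadow_sum : ∑' γ, m (S γ) ≠ ⊤ :=
    ne_top_of_le_ne_top (hpoincare.mul_left c).tsum_ofReal_ne_top (ENNReal.tsum_le_tsum hshadow)
  exact measure_eq_zero_of_forall_infinite_setOf_mem hshadow_sum hconical
end

section
/- Let Γ be a group of Möbius transformations, E ⊂ B^n a set with γ(E) = E or γ(E) ∩ E = ∅ for each γ ∈ Γ, and let Γ_E = {γ ∈ Γ : γ(E) = E} be its stabilizer. Let {γ_i}_{i∈I} be coset representatives of Γ/Γ_E with γ_0 = id, and let Λ_i denote the set of endpoints of γ_i(E). Then the sets Λ_i, i ∈ I, are pairwise disjoint. -/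
open Filter Pointwise

/-- A geodesic ray for the (hyperbolic) distance function `hd`, parametrized by arc length. -/
def IsGeodesicRay {X : Type*} (hd : X → X → ℝ) (R : ℝ → X) : Prop :=
  ∀ s t : ℝ, 0 ≤ s → 0 ≤ t → hd (R s) (R t) = |s - t|

/-- `z` is an endpoint of the open set `A` (for the hyperbolic distance `hd`): every geodesic
ray ending at `z` has a subray contained in `A` along which the `hd`-distance to the boundary
tends to infinity. -/
def IsEndpoint {X : Type*} [TopologicalSpace X] (hd : X → X → ℝ) (A : Set X) (z : X) : Prop :=
  ∀ R : ℝ → X, IsGeodesicRay hd R → Tendsto R atTop (nhds z) →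
    ∃ T : ℝ, (∀ t ≥ T, R t ∈ A) ∧
      ∀ M : ℝ, ∃ T' : ℝ, ∀ t ≥ T', ∀ w ∈ frontier A, M ≤ hd (R t) w

/-- Let `Γ` act on the hyperbolic ball `B^n`, let `E ⊆ B^n` be an open set
each of whose translates is equal to or disjoint from `E`, with stabilizer
`Γ_E = {γ : γ(E) = E}`.  If `{γ_i}_{i∈I}` are representatives of distinct cosets of `Γ/Γ_E`
and `Λ_i` is the set of endpoints (on the unit sphere) of the translate `γ_i(E)`, then the
sets `Λ_i`, `i ∈ I`, are pairwise disjoint. -/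
theorem endpoint_sets_of_translates_pairwise_disjoint {n : ℕ} {G : Type*} [Group G]
    [MulAction G (EuclideanSpace ℝ (Fin n))]
    (hd : EuclideanSpace ℝ (Fin n) → EuclideanSpace ℝ (Fin n) → ℝ)
    (E : Set (EuclideanSpace ℝ (Fin n)))
    (hEopen : IsOpen E) (hEball : E ⊆ Metric.ball 0 1)
    (hEnd : ∀ g : G, g • E = E ∨ Disjoint (g • E) E)
    {I : Type*} (γ : I → G)
    (hreps : ∀ i j : I, (γ i)⁻¹ * γ j ∈ MulAction.stabilizer G E → i = j)
    (hray : ∀ z ∈ Metric.sphere (0 : EuclideanSpace ℝ (Fin n)) 1,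
      ∃ R : ℝ → EuclideanSpace ℝ (Fin n), IsGeodesicRay hd R ∧ Tendsto R atTop (nhds z))
    (Λ : I → Set (EuclideanSpace ℝ (Fin n)))
    (hΛ : ∀ i, Λ i = {z ∈ Metric.sphere (0 : EuclideanSpace ℝ (Fin n)) 1 |
      IsEndpoint hd (γ i • E) z}) :
    Pairwise (Function.onFun Disjoint Λ) := by
  intro i j hij
  rw [Function.onFun, Set.disjoint_left]
  intro z hzi hzj
  rw [hΛ i] at hzi; rw [hΛ j] at hzj
  obtain ⟨hzs, hEi⟩ := hzi
  obtain ⟨-, hEj⟩ := hzj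
  -- the translates are disjoint
  have hdisj : Disjoint (γ i • E) (γ j • E) := by
    have := hEnd ((γ i)⁻¹ * γ j)
    rcases this with h | h
    · exact absurd (hreps i j h) hij
    · have : Disjoint (γ i • ((γ i)⁻¹ * γ j) • E) (γ i • E) :=
        Set.disjoint_smul_set (a := γ i) |>.mpr h
      rwa [smul_smul, mul_inv_cancel_left, disjoint_comm] at this
  obtain ⟨R, hR, hRz⟩ := hray z hzs
  obtain ⟨Ti, hTi, -⟩ := hEi R hR hRz
  obtain ⟨Tj, hTj, -⟩ := hEj R hR hRz
  exact Set.disjoint_left.mp hdisj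
    (hTi (max Ti Tj) (le_max_left _ _)) (hTj (max Ti Tj) (le_max_right _ _))
end

section
/- With notation as in the measure-extension setting, the measure defined by setting m* = m_{γ_i} on γ_i(Λ_e(E)) for each coset representative γ_i satisfies the α-conformal transformation rule for the full group Γ: (m*)_γ = m* for all γ ∈ Γ. -/
open MeasureTheory Pointwise

/-- The image measure `m_g` of a measure `m` under the action of a group element `g` (a
Möbius transformation), with derivative-norm cocycle `D` and exponent `α`, characterized by
`m_g(g(A)) = ∫_A |g'|^α dm`. -/
noncomputable def imageMeasure {X G : Type*} [MeasurableSpace X] [Group G] [MulAction G X]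
    (m : Measure X) (g : G) (D : G → X → ℝ) (α : ℝ) : Measure X :=
  (m.withDensity fun ξ => ENNReal.ofReal (D g ξ ^ α)).map (fun x => g • x)

/-- `withDensity` after `map` as `map` after `withDensity` of the pulled-back density. -/
lemma map_withDensity_aux {X : Type*} [MeasurableSpace X] (μ : Measure X) (f : X → X)
    (hf : Measurable f) (v : X → ENNReal) (hv : Measurable v) :
    (μ.map f).withDensity v = (μ.withDensity (v ∘ f)).map f := by
  ext s hs
  rw [withDensity_apply _ hs, Measure.map_apply hf hs,
    withDensity_apply _ (hf hs), setLIntegral_map hs hv hf]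
  rfl

/-- Composition rule: `(m_h)_g = m_{g h}`. -/
lemma imageMeasure_comp {X G : Type*} [MeasurableSpace X] [Group G] [MulAction G X]
    (hmeas : ∀ g : G, Measurable fun x : X => g • x)
    (D : G → X → ℝ) (α : ℝ)
    (hDmeas : ∀ g : G, Measurable (D g))
    (hDnonneg : ∀ (g : G) (ξ : X), 0 ≤ D g ξ)
    (hchain : ∀ (g h : G) (ξ : X), D (g * h) ξ = D g (h • ξ) * D h ξ)
    (m : Measure X) (g h : G) :
    imageMeasure (imageMeasure m h D α) g D α = imageMeasure m (g * h) D α := by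
  have hvmeas : ∀ k : G, Measurable fun ξ => ENNReal.ofReal (D k ξ ^ α) :=
    fun k => ENNReal.measurable_ofReal.comp ((hDmeas k).pow_const α)
  unfold imageMeasure
  rw [map_withDensity_aux _ _ (hmeas h) _ (hvmeas g), Measure.map_map (hmeas g) (hmeas h)]
  have hmul : ((m.withDensity fun ξ => ENNReal.ofReal (D h ξ ^ α)).withDensity
      ((fun ξ => ENNReal.ofReal (D g ξ ^ α)) ∘ fun x => h • x)) =
      m.withDensity ((fun ξ => ENNReal.ofReal (D h ξ ^ α)) *
        ((fun ξ => ENNReal.ofReal (D g ξ ^ α)) ∘ fun x => h • x)) :=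
    (withDensity_mul m (hvmeas h) ((hvmeas g).comp (hmeas h))).symm
  rw [hmul]
  have hfun : ((fun ξ => ENNReal.ofReal (D h ξ ^ α)) *
      ((fun ξ => ENNReal.ofReal (D g ξ ^ α)) ∘ fun x => h • x)) =
      fun ξ => ENNReal.ofReal (D (g * h) ξ ^ α) := by
    funext ξ
    simp only [Pi.mul_apply, Function.comp_apply]
    rw [hchain g h ξ, Real.mul_rpow (hDnonneg g (h • ξ)) (hDnonneg h ξ),
      ENNReal.ofReal_mul (Real.rpow_nonneg (hDnonneg g (h • ξ)) α), mul_comm]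
  rw [hfun]
  congr 1
  funext x
  simp [mul_smul]

/-- `imageMeasure` commutes with countable sums of measures. -/
lemma imageMeasure_sum {X G : Type*} [MeasurableSpace X] [Group G] [MulAction G X]
    (hmeas : ∀ g : G, Measurable fun x : X => g • x)
    (D : G → X → ℝ) (α : ℝ)
    (hDmeas : ∀ g : G, Measurable (D g))
    {I : Type*} (μ : I → Measure X) (g : G) :
    imageMeasure (Measure.sum μ) g D α = Measure.sum fun i => imageMeasure (μ i) g D α := by
  unfold imageMeasure
  rw [withDensity_sum]
  ext s hs
  rw [Measure.map_apply (hmeas g) hs, Measure.sum_apply _ ((hmeas g) hs),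
    Measure.sum_apply _ hs]
  exact tsum_congr fun i => (Measure.map_apply (hmeas g) hs).symm

/-- Let `Γ = G` act on `B^n`, `E` an end with stabilizer `Γ_E = H`, `m`
an `α`-conformal measure for `Γ_E` supported on the endpoint set `Λ = Λ_e(E)`, and
`{γ_i}_{i∈I}` a complete set of coset representatives of `Γ/Γ_E`, so the translates
`γ_i(Λ)` are pairwise disjoint.  Then the measure `m*` defined by setting `m* = m_{γ_i}` on
`γ_i(Λ)` for each `i` — i.e. `m* = Σ_i m_{γ_i}`, each summand being supported on the
corresponding translate — satisfies the `α`-conformal transformation rule for the full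
group `Γ`: `(m*)_γ = m*` for all `γ ∈ Γ`. -/
theorem piecewise_extension_is_conformal
    {X G : Type*} [MeasurableSpace X] [Group G] [MulAction G X]
    (hmeas : ∀ g : G, Measurable fun x : X => g • x)
    (D : G → X → ℝ) (α : ℝ) (hα : 0 ≤ α)
    (hDmeas : ∀ g : G, Measurable (D g))
    (hDnonneg : ∀ (g : G) (ξ : X), 0 ≤ D g ξ)
    (hchain : ∀ (g h : G) (ξ : X), D (g * h) ξ = D g (h • ξ) * D h ξ)
    (H : Subgroup G)                         -- the stabilizer `Γ_E` of the end `E`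
    (Λ : Set X) (hΛmeas : MeasurableSet Λ)   -- the endpoint set `Λ_e(E)`
    (hΛinv : ∀ h ∈ H, h • Λ = Λ)
    (hΛdisj : ∀ g g' : G, g⁻¹ * g' ∈ H ∨ Disjoint (g • Λ) (g' • Λ))
    (m : Measure X) [IsFiniteMeasure m]
    (hmconf : ∀ h ∈ H, imageMeasure m h D α = m)  -- `m` is `α`-conformal for `Γ_E`
    (hmsupp : m Λᶜ = 0)                            -- `m` is supported on `Λ`
    {I : Type*} [Countable I] (γ : I → G)
    (hreps : ∀ g : G, ∃! i : I, (γ i)⁻¹ * g ∈ H)   -- coset representatives of `Γ/Γ_E`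
    (mstar : Measure X)
    (hmstar : mstar = Measure.sum fun i : I => imageMeasure m (γ i) D α) :
    ∀ g : G, imageMeasure mstar g D α = mstar := by
  intro g
  subst hmstar
  rw [imageMeasure_sum hmeas D α hDmeas]
  -- the permutation induced by left multiplication by `g`
  have hkey : ∀ k : G, imageMeasure m (γ (hreps k).choose) D α = imageMeasure m k D α := by
    intro k
    have hh : (γ (hreps k).choose)⁻¹ * k ∈ H := (hreps k).choose_spec.1
    have : k = γ (hreps k).choose * ((γ (hreps k).choose)⁻¹ * k) := by group
    conv_rhs => rw [this]
    rw [← imageMeasure_comp hmeas D α hDmeas hDnonneg hchain, hmconf _ hh]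
  set σ : I → I := fun i => (hreps (g * γ i)).choose with hσ
  have hσmem : ∀ i, (γ (σ i))⁻¹ * (g * γ i) ∈ H := fun i => (hreps (g * γ i)).choose_spec.1
  have hinj : Function.Injective σ := by
    intro i i' hii
    have h1 : (γ i')⁻¹ * γ i ∈ H := by
      have := mul_mem (inv_mem (hσmem i')) (hσmem i)
      rw [hii] at this
      convert this using 1
      group
    have e1 := (hreps (γ i)).choose_spec
    have hi : i = (hreps (γ i)).choose := e1.2 i (by simpa using H.one_mem)
    have hi' : i' = (hreps (γ i)).choose := e1.2 i' h1
    rw [hi, hi']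
  have hsurj : Function.Surjective σ := by
    intro j
    refine ⟨(hreps (g⁻¹ * γ j)).choose, ?_⟩
    have hi : (γ (hreps (g⁻¹ * γ j)).choose)⁻¹ * (g⁻¹ * γ j) ∈ H :=
      (hreps (g⁻¹ * γ j)).choose_spec.1
    have : (γ j)⁻¹ * (g * γ (hreps (g⁻¹ * γ j)).choose) ∈ H := by
      have := inv_mem hi
      convert this using 1
      group
    exact ((hreps (g * γ (hreps (g⁻¹ * γ j)).choose)).choose_spec.2 j this).symm
  have hcomp : ∀ i, imageMeasure (imageMeasure m (γ i) D α) g D α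
      = imageMeasure m (γ (σ i)) D α := by
    intro i
    rw [imageMeasure_comp hmeas D α hDmeas hDnonneg hchain]
    exact (hkey (g * γ i)).symm
  simp only [hcomp]
  ext s hs
  rw [Measure.sum_apply _ hs, Measure.sum_apply _ hs]
  exact Equiv.tsum_eq (Equiv.ofBijective σ ⟨hinj, hsurj⟩)
    (fun i => imageMeasure m (γ i) D α s)
end

section
/- Let μ_i be a sequence of finite Borel measures on the closed ball, each of total mass 1, converging weakly to μ, and suppose for every compact set K ⊂ B^n ∪ Ω(Γ) there is I_K such that μ_i(ΓK) = 0 for i > I_K, where the measures μ_i are Γ-quasi-invariant atomic measures on orbits Γz_i exiting every Γ-invariant compact set. Then the weak limit μ is supported on the limit set Λ(Γ), i.e., μ(Ω(Γ)) = 0. -/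
/-!
By the portmanteau theorem `μ U ≤ liminf μᵢ U` for open `U`. Every point of `Y` has a compact
neighbourhood `K ⊆ Y`; its interior lies in `ΓK`, so it is eventually `μᵢ`-null and therefore
`μ`-null. Thus `μ` vanishes locally on `Y`, and second countability gives `μ Y = 0`.
-/

open MeasureTheory Filter Pointwise Topology

theorem MeasureTheory.measure_le_liminf_of_forall_tendsto_integral
    {X : Type*} [TopologicalSpace X] [CompactSpace X] [HasOuterApproxClosed X]
    [MeasurableSpace X] [OpensMeasurableSpace X] {ι : Type*} {L : Filter ι}
    {μs : ι → Measure X} [∀ i, IsProbabilityMeasure (μs i)]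
    {μ : Measure X} [IsProbabilityMeasure μ]
    (h : ∀ f : C(X, ℝ), Tendsto (fun i => ∫ x, f x ∂μs i) L (𝓝 (∫ x, f x ∂μ)))
    {U : Set X} (hU : IsOpen U) :
    μ U ≤ L.liminf fun i => μs i U := by
  have hlim : Tendsto (β := ProbabilityMeasure X) (fun i => ⟨μs i, inferInstance⟩) L
      (𝓝 ⟨μ, inferInstance⟩) :=
    ProbabilityMeasure.tendsto_iff_forall_integral_tendsto.2 fun f => h f.toContinuousMap
  exact ProbabilityMeasure.le_liminf_measure_open_of_tendsto hlim hU

theorem Set.subset_iUnion_smul {G X : Type*} [Monoid G] [MulAction G X] (K : Set X) :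
    K ⊆ ⋃ g : G, g • K :=
  fun x hx => Set.mem_iUnion.2 ⟨1, by simpa using hx⟩

theorem weak_limit_supported_on_limit_set_general
    {X : Type*} [MetricSpace X] [CompactSpace X] [MeasurableSpace X] [BorelSpace X]
    {G : Type*} [Group G] [MulAction G X]
    (Y : Set X)
    (hYloc : ∀ y ∈ Y, ∃ K : Set X, IsCompact K ∧ K ⊆ Y ∧ K ∈ nhds y)
    (μseq : ℕ → Measure X) [∀ i, IsProbabilityMeasure (μseq i)]
    (μ : Measure X) [IsProbabilityMeasure μ]
    (hweak : ∀ f : C(X, ℝ),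
      Tendsto (fun i => ∫ x, f x ∂(μseq i)) atTop (nhds (∫ x, f x ∂μ)))
    (hnull : ∀ K : Set X, IsCompact K → K ⊆ Y →
      ∃ N : ℕ, ∀ i ≥ N, μseq i (⋃ g : G, g • K) = 0) :
    μ Y = 0 := by
  refine measure_null_of_locally_null Y fun y hy => ?_
  obtain ⟨K, hK, hKY, hKy⟩ := hYloc y hy
  obtain ⟨N, hN⟩ := hnull K hK hKY
  have hvanish : ∀ᶠ i in atTop, μseq i (interior K) = 0 :=
    eventually_atTop.2 ⟨N, fun i hi =>
      measure_mono_null (interior_subset.trans K.subset_iUnion_smul) (hN i hi)⟩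
  refine ⟨interior K, mem_nhdsWithin_of_mem_nhds (interior_mem_nhds.2 hKy), ?_⟩
  refine nonpos_iff_eq_zero.1 ?_
  calc μ (interior K) ≤ atTop.liminf fun i => μseq i (interior K) :=
        measure_le_liminf_of_forall_tendsto_integral hweak isOpen_interior
    _ = 0 := by rw [liminf_congr hvanish, liminf_const]

/-- Let `X` be the closed unit ball (a compact metric space), `Γ = G` a
Kleinian group acting on it, `Y = B^n ∪ Ω(Γ)` the (open) complement of the limit set, on
which every point has a compact neighborhood contained in `Y`.  Let `μ_i` be probability
measures converging weakly to `μ` (i.e. `∫ f dμ_i → ∫ f dμ` for every continuous `f`), and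
suppose that for every compact `K ⊆ Y` there is `I_K` with `μ_i(ΓK) = 0` for `i ≥ I_K`
(the `μ_i` being atomic measures on orbits exiting every `Γ`-invariant compact set).  Then
the weak limit `μ` is supported on the limit set `Λ(Γ) = X \ Y`, i.e. `μ(Y) = 0` (in
particular `μ(Ω(Γ)) = 0`). -/
theorem weak_limit_supported_on_limit_set
    {X : Type*} [MetricSpace X] [CompactSpace X] [MeasurableSpace X] [BorelSpace X]
    {G : Type*} [Group G] [MulAction G X]
    (Y : Set X) (hYopen : IsOpen Y)
    (hYloc : ∀ y ∈ Y, ∃ K : Set X, IsCompact K ∧ K ⊆ Y ∧ K ∈ nhds y)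
    (μseq : ℕ → Measure X) [∀ i, IsProbabilityMeasure (μseq i)]
    (μ : Measure X) [IsProbabilityMeasure μ]
    (hweak : ∀ f : C(X, ℝ),
      Tendsto (fun i => ∫ x, f x ∂(μseq i)) atTop (nhds (∫ x, f x ∂μ)))
    (hnull : ∀ K : Set X, IsCompact K → K ⊆ Y →
      ∃ N : ℕ, ∀ i ≥ N, μseq i (⋃ g : G, g • K) = 0) :
    μ Y = 0 :=
  weak_limit_supported_on_limit_set_general Y hYloc μseq μ hweak hnull
end
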